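/- If s + 2r > 1 with s, r > 0 and u ∈ L^3(0,T;B^s_{3,∞}(T^3)), Z ∈ L^3(0,T;B^r_{3,∞}(T^3)), then σ_2(|ξ|) := |ξ|^{s+2r−1} → 0 as |ξ| → 0 and consequently the defect term D_2(u,Z) := lim_{ε→0} (1/2)∫ ∇χ_ε(ξ)·δu(ξ;x,t)|δZ(ξ;x,t)|^2 dξ vanishes identically (in the sense of distributions). -/

import Mathlib

open MeasureTheory Real Filter Topology ENNReal

noncomputable section

/-- The spatial domain `ℝ³`; the torus `𝕋³` is modelled as `2π`-periodic functions on `ℝ³`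
integrated over the fundamental cell `torusBox`. -/
abbrev D3 : Type := Fin 3 → ℝ

/-- The fundamental cell `[0, 2π]³` of the torus `𝕋³`. -/
def torusBox : Set D3 := Set.Icc 0 (fun _ => 2 * π)

/-- The measure on the torus: Lebesgue measure restricted to the fundamental cell. -/
def μT : Measure D3 := volume.restrict torusBox

/-- A function on `ℝ³` descends to the torus iff it is `2π`-periodic in each coordinate. -/
def TorusFn {E : Type*} (f : D3 → E) : Prop :=
  ∀ (x : D3) (i : Fin 3), f (x + (2 * π) • (Pi.single i 1 : D3)) = f x

/-- The Besov `B^s_{3,∞}` norm on the torus: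
`‖f‖_{L³} + sup_{ξ ≠ 0} ‖f(·+ξ) - f‖_{L³} / |ξ|^s`. -/
def besovNorm (s : ℝ) {E : Type*} [NormedAddCommGroup E] (f : D3 → E) : ℝ≥0∞ :=
  eLpNorm f 3 μT +
    ⨆ (ξ : D3) (_ : ξ ≠ 0),
      eLpNorm (fun x => f (x + ξ) - f x) 3 μT / ENNReal.ofReal (‖ξ‖ ^ s)

/-- Mollification `f ∗ φ_ε` with `φ_ε(y) = ε⁻³ φ(y/ε)`. -/
def moll (φ : D3 → ℝ) (ε : ℝ) {E : Type*} [NormedAddCommGroup E] [NormedSpace ℝ E]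
    (f : D3 → E) : D3 → E :=
  fun x => ∫ y : D3, ((ε ^ (3 : ℕ))⁻¹ * φ (ε⁻¹ • y)) • f (x - y)

/-- The mollified defect term
`D_{2,ε}(u,Z)(x,t) = ½ ∫_{ℝ³} ∇χ_ε(ξ) · δu(ξ;x,t) |δZ(ξ;x,t)|² dξ`. -/
def D2eps (χ : D3 → ℝ) (ε : ℝ) (u : ℝ → D3 → Fin 3 → ℝ) (Z : ℝ → D3 → ℝ)
    (x : D3) (t : ℝ) : ℝ :=
  (1 / 2) * ∫ ξ : D3,
    (∑ i, fderiv ℝ (fun η : D3 => (ε ^ (3 : ℕ))⁻¹ * χ (ε⁻¹ • η)) ξ (Pi.single i 1 : D3)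
        * (u t (x + ξ) i - u t x i)) * (Z t (x + ξ) - Z t x) ^ 2

/-! ### Auxiliary lemmas -/

/-- The Besov seminorm controls the `L³` norm of increments. -/
lemma besov_diff_le {w : ℝ} {E : Type*} [NormedAddCommGroup E] (f : D3 → E) {ξ : D3}
    (hξ : ξ ≠ 0) :
    eLpNorm (fun x => f (x + ξ) - f x) 3 μT ≤ besovNorm w f * ENNReal.ofReal (‖ξ‖ ^ w) := by
  have h0 : ENNReal.ofReal (‖ξ‖ ^ w) ≠ 0 := by
    simp only [ne_eq, ENNReal.ofReal_eq_zero, not_le]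
    exact Real.rpow_pos_of_pos (norm_pos_iff.mpr hξ) w
  have hb : eLpNorm (fun x => f (x + ξ) - f x) 3 μT / ENNReal.ofReal (‖ξ‖ ^ w)
      ≤ besovNorm w f := by
    refine le_trans ?_ le_add_self
    exact le_iSup₂ (f := fun (ξ : D3) (_ : ξ ≠ 0) =>
      eLpNorm (fun x => f (x + ξ) - f x) 3 μT / ENNReal.ofReal (‖ξ‖ ^ w)) ξ hξ
  exact (ENNReal.div_le_iff h0 ENNReal.ofReal_ne_top).mp hb

/-- Hölder's inequality with exponents `3` and `3/2`, in `ℝ≥0∞` form. -/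
lemma lint_holder {α : Type*} [MeasurableSpace α] (μ : Measure α) (A B : α → ℝ≥0∞)
    (hA : Measurable A) (hB : Measurable B) :
    ∫⁻ x, A x ^ ((1:ℝ)/3) * B x ^ ((2:ℝ)/3) ∂μ ≤
      (∫⁻ x, A x ∂μ) ^ ((1:ℝ)/3) * (∫⁻ x, B x ∂μ) ^ ((2:ℝ)/3) :=
  ENNReal.lintegral_mul_norm_pow_le hA.aemeasurable hB.aemeasurable
    (by norm_num) (by norm_num) (by norm_num)

/-- The derivative of the rescaled mollifier. -/
lemma chi_eps_fderiv (χ : D3 → ℝ) (hχsm : ContDiff ℝ (⊤ : ℕ∞) χ) {ε : ℝ} (hε : ε ≠ 0) (ξ v : D3) :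
    fderiv ℝ (fun η : D3 => (ε ^ (3 : ℕ))⁻¹ * χ (ε⁻¹ • η)) ξ v
      = (ε ^ (3 : ℕ))⁻¹ * (ε⁻¹ * fderiv ℝ χ (ε⁻¹ • ξ) v) := by
  have hχd : Differentiable ℝ χ := hχsm.differentiable (by simp)
  set L : D3 →L[ℝ] D3 := ε⁻¹ • ContinuousLinearMap.id ℝ D3 with hL
  have hLap : ∀ η : D3, ε⁻¹ • η = L η := fun η => by simp [hL]
  have hLd : DifferentiableAt ℝ (fun η : D3 => χ (ε⁻¹ • η)) ξ := by
    simp only [hLap]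
    exact (hχd _).comp ξ L.differentiableAt
  rw [fderiv_const_mul hLd]
  simp only [ContinuousLinearMap.smul_apply, smul_eq_mul]
  congr 1
  have hcomp : fderiv ℝ (χ ∘ fun η : D3 => L η) ξ = (fderiv ℝ χ (L ξ)).comp (fderiv ℝ (⇑L) ξ) :=
    fderiv_comp ξ (hχd _) L.differentiableAt
  have : (fun η : D3 => χ (ε⁻¹ • η)) = χ ∘ fun η : D3 => L η := by
    funext η; simp [hLap]
  rw [this, hcomp, L.fderiv]
  simp [hL, _root_.map_smul, smul_eq_mul]

/-- Scaling of the mollifier-gradient integral: it behaves like `ε^(a-1)`. -/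
lemma moll_scale (χ : D3 → ℝ) (hχsm : ContDiff ℝ (⊤ : ℕ∞) χ) (hχc : HasCompactSupport χ)
    (a : ℝ) (ha : 0 < a) {ε : ℝ} (hε : 0 < ε) :
    ∫⁻ ξ : D3, ENNReal.ofReal
        ((∑ i, |fderiv ℝ (fun η : D3 => (ε ^ (3 : ℕ))⁻¹ * χ (ε⁻¹ • η)) ξ (Pi.single i 1 : D3)|)
          * ‖ξ‖ ^ a)
      = ENNReal.ofReal (ε ^ (a - 1) *
          ∫ ξ : D3, (∑ i, |fderiv ℝ χ ξ (Pi.single i 1 : D3)|) * ‖ξ‖ ^ a) := by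
  have hε' : ε ≠ 0 := ne_of_gt hε
  set G : D3 → ℝ := fun ξ => ∑ i, |fderiv ℝ χ ξ (Pi.single i 1 : D3)| with hG
  set Kf : D3 → ℝ := fun ξ => G ξ * ‖ξ‖ ^ a with hKf
  have hGnn : ∀ ξ, 0 ≤ G ξ := fun ξ => Finset.sum_nonneg fun i _ => abs_nonneg _
  have hKnn : ∀ ξ, 0 ≤ Kf ξ := fun ξ =>
    mul_nonneg (hGnn ξ) (Real.rpow_nonneg (norm_nonneg _) _)
  have hGcont : Continuous G := by
    refine continuous_finset_sum _ fun i _ => ?_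
    exact ((hχsm.continuous_fderiv (by simp)).clm_apply continuous_const).abs
  have hKcont : Continuous Kf :=
    hGcont.mul (continuous_norm.rpow_const fun x => Or.inr ha.le)
  have hGsupp : HasCompactSupport G := by
    have h1 : HasCompactSupport (fderiv ℝ χ) := HasCompactSupport.fderiv (𝕜 := ℝ) hχc
    have : G = (fun L : D3 →L[ℝ] ℝ => ∑ i, |L (Pi.single i 1 : D3)|) ∘ fderiv ℝ χ := rfl
    rw [this]
    exact h1.comp_left (by simp)
  have hKsupp : HasCompactSupport Kf := hGsupp.mul_right
  have hKint : Integrable Kf := hKcont.integrable_of_hasCompactSupport hKsupp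
  set c : ℝ := (ε ^ (3 : ℕ))⁻¹ * ε⁻¹ * ε ^ a with hc
  have hcnn : 0 ≤ c := by
    apply mul_nonneg (mul_nonneg _ _) (Real.rpow_nonneg hε.le _) <;> positivity
  have hptwise : ∀ ξ : D3,
      (∑ i, |fderiv ℝ (fun η : D3 => (ε ^ (3 : ℕ))⁻¹ * χ (ε⁻¹ • η)) ξ (Pi.single i 1 : D3)|)
        * ‖ξ‖ ^ a = c * Kf (ε⁻¹ • ξ) := by
    intro ξ
    have hnrm : ‖ξ‖ ^ a = ε ^ a * ‖ε⁻¹ • ξ‖ ^ a := by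
      rw [← Real.mul_rpow hε.le (norm_nonneg _)]
      congr 1
      rw [norm_smul, Real.norm_eq_abs, abs_of_pos (inv_pos.mpr hε)]
      field_simp
    have hsum : (∑ i, |fderiv ℝ (fun η : D3 => (ε ^ (3 : ℕ))⁻¹ * χ (ε⁻¹ • η)) ξ
        (Pi.single i 1 : D3)|) = (ε ^ (3 : ℕ))⁻¹ * ε⁻¹ * G (ε⁻¹ • ξ) := by
      rw [hG, Finset.mul_sum]
      refine Finset.sum_congr rfl fun i _ => ?_
      rw [chi_eps_fderiv χ hχsm hε' ξ]
      rw [abs_mul, abs_mul]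
      rw [abs_of_pos (by positivity : (0:ℝ) < (ε ^ (3 : ℕ))⁻¹),
        abs_of_pos (inv_pos.mpr hε)]
      ring
    rw [hsum, hnrm, hKf, hc]
    ring
  simp only [hptwise]
  have hint2 : Integrable fun ξ : D3 => c * Kf (ε⁻¹ • ξ) :=
    (hKint.comp_smul (inv_ne_zero hε')).const_mul c
  rw [← MeasureTheory.ofReal_integral_eq_lintegral_ofReal hint2
    (Filter.Eventually.of_forall fun ξ => mul_nonneg hcnn (hKnn _))]
  congr 1
  rw [MeasureTheory.integral_const_mul]
  rw [MeasureTheory.Measure.integral_comp_smul volume Kf ε⁻¹]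
  have hfr : Module.finrank ℝ D3 = 3 := by
    simp [Module.finrank_fintype_fun_eq_card]
  rw [hfr]
  rw [smul_eq_mul]
  have habs : |((ε⁻¹) ^ 3)⁻¹| = ε ^ (3:ℕ) := by
    rw [← inv_pow, inv_inv, abs_of_pos (by positivity)]
  rw [habs]
  have hrw : ε ^ (a - 1) = c * ε ^ (3:ℕ) := by
    rw [hc, Real.rpow_sub hε, Real.rpow_one]
    field_simp
  rw [hrw]
  ring

/-- Bound of the `x`-integral of `‖D2eps‖` by a double integral of increments. -/
lemma D2_xbound (χ : D3 → ℝ) (hχsm : ContDiff ℝ (⊤ : ℕ∞) χ) {ε : ℝ} (hε : 0 < ε)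
    (u : ℝ → D3 → Fin 3 → ℝ) (Z : ℝ → D3 → ℝ) (t : ℝ)
    (hu1 : Measurable (u t)) (hZ1 : Measurable (Z t)) :
    ∫⁻ x, (‖D2eps χ ε u Z x t‖₊ : ℝ≥0∞) ∂μT ≤
      ∫⁻ ξ : D3, ENNReal.ofReal
          (∑ i, |fderiv ℝ (fun η : D3 => (ε ^ (3 : ℕ))⁻¹ * χ (ε⁻¹ • η)) ξ
              (Pi.single i 1 : D3)|) *
        ∫⁻ x, (‖u t (x + ξ) - u t x‖₊ : ℝ≥0∞) *
          (‖Z t (x + ξ) - Z t x‖₊ : ℝ≥0∞) ^ (2 : ℕ) ∂μT := by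
  have hε' : ε ≠ 0 := ne_of_gt hε
  set χε : D3 → ℝ := fun η => (ε ^ (3 : ℕ))⁻¹ * χ (ε⁻¹ • η) with hχε
  have hχεsm : ContDiff ℝ (⊤ : ℕ∞) χε :=
    contDiff_const.mul (hχsm.comp (contDiff_id.const_smul ε⁻¹))
  have hgi : ∀ i : Fin 3, Continuous fun ξ : D3 => fderiv ℝ χε ξ (Pi.single i 1 : D3) :=
    fun i => (hχεsm.continuous_fderiv (by simp)).clm_apply continuous_const
  set G : D3 → ℝ := fun ξ => ∑ i, |fderiv ℝ χε ξ (Pi.single i 1 : D3)| with hGdef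
  have hGnn : ∀ ξ, 0 ≤ G ξ := fun ξ => Finset.sum_nonneg fun i _ => abs_nonneg _
  set W : D3 → D3 → ℝ := fun x ξ =>
    (∑ i, fderiv ℝ χε ξ (Pi.single i 1 : D3) * (u t (x + ξ) i - u t x i))
      * (Z t (x + ξ) - Z t x) ^ 2 with hWdef
  have hadd : Measurable fun p : D3 × D3 => p.1 + p.2 := measurable_fst.add measurable_snd
  have hWmeas : Measurable fun p : D3 × D3 => W p.1 p.2 := by
    apply Measurable.mul
    · apply Finset.measurable_sum
      intro i _
      exact ((hgi i).measurable.comp measurable_snd).mul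
        (((measurable_pi_apply i).comp (hu1.comp hadd)).sub
          ((measurable_pi_apply i).comp (hu1.comp measurable_fst)))
    · exact (((hZ1.comp hadd).sub (hZ1.comp measurable_fst)).pow_const 2)
  have hpt : ∀ x : D3, (‖D2eps χ ε u Z x t‖₊ : ℝ≥0∞) ≤ ∫⁻ ξ, (‖W x ξ‖₊ : ℝ≥0∞) := by
    intro x
    have h1 : (‖D2eps χ ε u Z x t‖₊ : ℝ≥0∞) ≤ (‖∫ ξ : D3, W x ξ‖₊ : ℝ≥0∞) := by
      rw [← enorm_eq_nnnorm, ← enorm_eq_nnnorm, Real.enorm_eq_ofReal_abs, Real.enorm_eq_ofReal_abs]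
      apply ENNReal.ofReal_le_ofReal
      have : D2eps χ ε u Z x t = (1 / 2) * ∫ ξ : D3, W x ξ := rfl
      rw [this, abs_mul, (by norm_num : |(1:ℝ)/2| = 1/2)]
      linarith [abs_nonneg (∫ ξ : D3, W x ξ)]
    exact h1.trans (enorm_integral_le_lintegral_enorm _)
  haveI : SFinite μT := inferInstanceAs (SFinite (volume.restrict torusBox))
  refine le_trans (lintegral_mono hpt) ?_
  rw [lintegral_lintegral_swap hWmeas.enorm.aemeasurable]
  refine lintegral_mono fun ξ => ?_
  have hptw : ∀ x : D3, (‖W x ξ‖₊ : ℝ≥0∞) ≤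
      ENNReal.ofReal (G ξ) * ((‖u t (x + ξ) - u t x‖₊ : ℝ≥0∞) *
        (‖Z t (x + ξ) - Z t x‖₊ : ℝ≥0∞) ^ (2 : ℕ)) := by
    intro x
    have hreal : |W x ξ| ≤ G ξ * (‖u t (x + ξ) - u t x‖ * |Z t (x + ξ) - Z t x| ^ 2) := by
      rw [hWdef]
      simp only [abs_mul, abs_pow]
      rw [← mul_assoc]
      apply mul_le_mul_of_nonneg_right _ (by positivity)
      calc |∑ i, fderiv ℝ χε ξ (Pi.single i 1 : D3) * (u t (x + ξ) i - u t x i)|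
          ≤ ∑ i, |fderiv ℝ χε ξ (Pi.single i 1 : D3) * (u t (x + ξ) i - u t x i)| :=
            Finset.abs_sum_le_sum_abs _ _
        _ ≤ ∑ i, |fderiv ℝ χε ξ (Pi.single i 1 : D3)| * ‖u t (x + ξ) - u t x‖ := by
            apply Finset.sum_le_sum
            intro i _
            rw [abs_mul]
            apply mul_le_mul_of_nonneg_left _ (abs_nonneg _)
            have h := norm_le_pi_norm (u t (x + ξ) - u t x) i
            simpa [Real.norm_eq_abs] using h
        _ = G ξ * ‖u t (x + ξ) - u t x‖ := by rw [hGdef, Finset.sum_mul]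
    calc (‖W x ξ‖₊ : ℝ≥0∞) = ENNReal.ofReal |W x ξ| := Real.enorm_eq_ofReal_abs _
      _ ≤ ENNReal.ofReal (G ξ * (‖u t (x + ξ) - u t x‖ * |Z t (x + ξ) - Z t x| ^ 2)) :=
          ENNReal.ofReal_le_ofReal hreal
      _ = ENNReal.ofReal (G ξ) * ((‖u t (x + ξ) - u t x‖₊ : ℝ≥0∞) *
          (‖Z t (x + ξ) - Z t x‖₊ : ℝ≥0∞) ^ (2 : ℕ)) := by
        rw [ENNReal.ofReal_mul (hGnn ξ), ENNReal.ofReal_mul (norm_nonneg _),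
          ofReal_norm, ENNReal.ofReal_pow (abs_nonneg _)]
        congr 2
        rw [← enorm_eq_nnnorm, Real.enorm_eq_ofReal_abs]
  calc ∫⁻ x, (‖W x ξ‖₊ : ℝ≥0∞) ∂μT
      ≤ ∫⁻ x, ENNReal.ofReal (G ξ) * ((‖u t (x + ξ) - u t x‖₊ : ℝ≥0∞) *
          (‖Z t (x + ξ) - Z t x‖₊ : ℝ≥0∞) ^ (2 : ℕ)) ∂μT := lintegral_mono hptw
    _ = ENNReal.ofReal (G ξ) * ∫⁻ x, (‖u t (x + ξ) - u t x‖₊ : ℝ≥0∞) *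
          (‖Z t (x + ξ) - Z t x‖₊ : ℝ≥0∞) ^ (2 : ℕ) ∂μT :=
        lintegral_const_mul' _ _ ENNReal.ofReal_ne_top

/-- If `s + 2r > 1` with `s, r > 0`, `u ∈ L³(0,T;B^s_{3,∞}(𝕋³))` and
`Z ∈ L³(0,T;B^r_{3,∞}(𝕋³))`, then `σ₂(|ξ|) := |ξ|^{s+2r−1} → 0` as `|ξ| → 0⁺`, and
consequently the defect term `D₂(u,Z) = lim_{ε→0} D_{2,ε}(u,Z)` vanishes identically in the
sense of distributions. -/
theorem stmt12 (T : ℝ) (hT : 0 < T) (s r : ℝ) (hs : 0 < s) (hr : 0 < r) (hsr : 1 < s + 2 * r)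
    (χ : D3 → ℝ) (hχsm : ContDiff ℝ (⊤ : ℕ∞) χ) (hχc : HasCompactSupport χ)
    (hχrad : ∀ x y : D3, ‖x‖ = ‖y‖ → χ x = χ y) (hχ1 : ∫ ξ : D3, χ ξ = 1)
    (u : ℝ → D3 → Fin 3 → ℝ) (Z : ℝ → D3 → ℝ)
    (humeas : Measurable (Function.uncurry u)) (hZmeas : Measurable (Function.uncurry Z))
    (huper : ∀ t, TorusFn (u t)) (hZper : ∀ t, TorusFn (Z t))
    (hu : ∫⁻ t in Set.Ioo 0 T, (besovNorm s (u t)) ^ 3 < ⊤)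
    (hZ : ∫⁻ t in Set.Ioo 0 T, (besovNorm r (Z t)) ^ 3 < ⊤) :
    Tendsto (fun ρ : ℝ => ρ ^ (s + 2 * r - 1)) (𝓝[>] 0) (𝓝 0) ∧
    ∀ ψ : ℝ → D3 → ℝ,
      ContDiff ℝ (⊤ : ℕ∞) (fun q : ℝ × D3 => ψ q.1 q.2) →
      (∀ t x, t ≤ 0 ∨ T ≤ t → ψ t x = 0) →
      (∀ t, TorusFn (ψ t)) →
      Tendsto (fun ε : ℝ =>
          ∫ t in Set.Ioo 0 T, ∫ x in torusBox, D2eps χ ε u Z x t * ψ t x)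
        (𝓝[>] 0) (𝓝 0) := by
  have hpos : 0 < s + 2 * r - 1 := by linarith
  have hapos : 0 < s + 2 * r := by linarith
  have part1 : Tendsto (fun ρ : ℝ => ρ ^ (s + 2 * r - 1)) (𝓝[>] 0) (𝓝 0) := by
    have h := (Real.continuousAt_rpow_const 0 (s + 2 * r - 1) (Or.inr hpos.le)).tendsto
    rw [Real.zero_rpow (ne_of_gt hpos)] at h
    exact h.mono_left nhdsWithin_le_nhds
  refine ⟨part1, ?_⟩
  intro ψ hψsm hψ0 hψper
  haveI : SFinite μT := inferInstanceAs (SFinite (volume.restrict torusBox))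
  have hboxmeas : MeasurableSet torusBox := measurableSet_Icc
  have hut : ∀ t, Measurable (u t) := fun t => humeas.comp measurable_prodMk_left
  have hZt : ∀ t, Measurable (Z t) := fun t => hZmeas.comp measurable_prodMk_left
  -- bound for ψ
  have hboxcomp : IsCompact torusBox := isCompact_Icc
  have hKcomp : IsCompact (Set.Icc (0:ℝ) T ×ˢ torusBox) := isCompact_Icc.prod hboxcomp
  obtain ⟨C0, hC0⟩ := hKcomp.exists_bound_of_continuousOn hψsm.continuous.continuousOn
  set Cψ : ℝ := max C0 0 with hCψ
  have hCψnn : 0 ≤ Cψ := le_max_right _ _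
  have hψbd : ∀ t ∈ Set.Ioo 0 T, ∀ x ∈ torusBox, |ψ t x| ≤ Cψ := by
    intro t ht x hx
    have := hC0 (t, x) ⟨⟨ht.1.le, ht.2.le⟩, hx⟩
    exact le_trans (by simpa [Real.norm_eq_abs] using this) (le_max_left _ _)
  -- constants
  set K0 : ℝ := ∫ ξ : D3, (∑ i, |fderiv ℝ χ ξ (Pi.single i 1 : D3)|) * ‖ξ‖ ^ (s + 2 * r)
    with hK0
  have hK0nn : 0 ≤ K0 :=
    integral_nonneg fun ξ => mul_nonneg (Finset.sum_nonneg fun i _ => abs_nonneg _)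
      (Real.rpow_nonneg (norm_nonneg _) _)
  set Mu : ℝ≥0∞ := ∫⁻ t in Set.Ioo 0 T, (besovNorm s (u t)) ^ 3 with hMu
  set Mz : ℝ≥0∞ := ∫⁻ t in Set.Ioo 0 T, (besovNorm r (Z t)) ^ 3 with hMz
  set Q : ℝ≥0∞ := Mu ^ ((1:ℝ)/3) * Mz ^ ((2:ℝ)/3) with hQ
  have hQtop : Q ≠ ⊤ :=
    ENNReal.mul_ne_top (ENNReal.rpow_ne_top_of_nonneg (by norm_num) hu.ne)
      (ENNReal.rpow_ne_top_of_nonneg (by norm_num) hZ.ne)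
  -- the time-integral bound, uniform in ξ
  have stepC : ∀ ξ : D3,
      (∫⁻ t in Set.Ioo 0 T, ∫⁻ x, (‖u t (x + ξ) - u t x‖₊ : ℝ≥0∞) *
          (‖Z t (x + ξ) - Z t x‖₊ : ℝ≥0∞) ^ (2 : ℕ) ∂μT)
        ≤ ENNReal.ofReal (‖ξ‖ ^ (s + 2 * r)) * Q := by
    intro ξ
    by_cases hξ : ξ = 0
    · subst hξ
      have h0 : ∀ t : ℝ, (∫⁻ x, (‖u t (x + 0) - u t x‖₊ : ℝ≥0∞) *
          (‖Z t (x + 0) - Z t x‖₊ : ℝ≥0∞) ^ (2 : ℕ) ∂μT) = 0 := by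
        intro t
        have : ∀ x : D3, (‖u t (x + 0) - u t x‖₊ : ℝ≥0∞) *
            (‖Z t (x + 0) - Z t x‖₊ : ℝ≥0∞) ^ (2 : ℕ) = 0 := by
          intro x; simp
        simp only [this, lintegral_zero]
      simp only [h0, lintegral_zero]
      exact zero_le
    · have hξpos : 0 < ‖ξ‖ := norm_pos_iff.mpr hξ
      set Pu : ℝ → ℝ≥0∞ := fun t => ∫⁻ x, (‖u t (x + ξ) - u t x‖₊ : ℝ≥0∞) ^ (3:ℝ) ∂μT
        with hPu
      set Pz : ℝ → ℝ≥0∞ := fun t => ∫⁻ x, (‖Z t (x + ξ) - Z t x‖₊ : ℝ≥0∞) ^ (3:ℝ) ∂μT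
        with hPz
      -- measurability of Pu, Pz in t
      have hPumeas : Measurable Pu := by
        apply Measurable.lintegral_prod_right'
          (f := fun p : ℝ × D3 => (‖u p.1 (p.2 + ξ) - u p.1 p.2‖₊ : ℝ≥0∞) ^ (3:ℝ))
        apply Measurable.pow_const
        refine Measurable.coe_nnreal_ennreal (Measurable.nnnorm ?_)
        exact (humeas.comp (measurable_fst.prodMk (measurable_snd.add_const ξ))).sub
          (humeas.comp (measurable_fst.prodMk measurable_snd))
      have hPzmeas : Measurable Pz := by
        apply Measurable.lintegral_prod_right'
          (f := fun p : ℝ × D3 => (‖Z p.1 (p.2 + ξ) - Z p.1 p.2‖₊ : ℝ≥0∞) ^ (3:ℝ))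
        apply Measurable.pow_const
        refine Measurable.coe_nnreal_ennreal (Measurable.nnnorm ?_)
        exact (hZmeas.comp (measurable_fst.prodMk (measurable_snd.add_const ξ))).sub
          (hZmeas.comp (measurable_fst.prodMk measurable_snd))
      -- Hölder in x
      have hΦle : ∀ t : ℝ, (∫⁻ x, (‖u t (x + ξ) - u t x‖₊ : ℝ≥0∞) *
          (‖Z t (x + ξ) - Z t x‖₊ : ℝ≥0∞) ^ (2 : ℕ) ∂μT)
            ≤ Pu t ^ ((1:ℝ)/3) * Pz t ^ ((2:ℝ)/3) := by
        intro t
        have hrw : ∀ x : D3, (‖u t (x + ξ) - u t x‖₊ : ℝ≥0∞) *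
            (‖Z t (x + ξ) - Z t x‖₊ : ℝ≥0∞) ^ (2 : ℕ)
            = ((‖u t (x + ξ) - u t x‖₊ : ℝ≥0∞) ^ (3:ℝ)) ^ ((1:ℝ)/3) *
              ((‖Z t (x + ξ) - Z t x‖₊ : ℝ≥0∞) ^ (3:ℝ)) ^ ((2:ℝ)/3) := by
          intro x
          rw [← ENNReal.rpow_natCast ((‖Z t (x + ξ) - Z t x‖₊ : ℝ≥0∞)) 2,
            ← ENNReal.rpow_mul, ← ENNReal.rpow_mul]
          norm_num
        calc (∫⁻ x, (‖u t (x + ξ) - u t x‖₊ : ℝ≥0∞) *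
            (‖Z t (x + ξ) - Z t x‖₊ : ℝ≥0∞) ^ (2 : ℕ) ∂μT)
            = ∫⁻ x, ((‖u t (x + ξ) - u t x‖₊ : ℝ≥0∞) ^ (3:ℝ)) ^ ((1:ℝ)/3) *
              ((‖Z t (x + ξ) - Z t x‖₊ : ℝ≥0∞) ^ (3:ℝ)) ^ ((2:ℝ)/3) ∂μT :=
              lintegral_congr hrw
          _ ≤ Pu t ^ ((1:ℝ)/3) * Pz t ^ ((2:ℝ)/3) := by
              apply lint_holder
              · exact (((hut t).comp (measurable_add_const ξ)).sub (hut t)).enorm.pow_const _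
              · exact (((hZt t).comp (measurable_add_const ξ)).sub (hZt t)).enorm.pow_const _
      -- besov bounds for Pu, Pz
      have hPuB : ∀ t : ℝ, Pu t ≤ (besovNorm s (u t)) ^ (3:ℕ) *
          ENNReal.ofReal (‖ξ‖ ^ s) ^ (3:ℝ) := by
        intro t
        have heq : Pu t = (eLpNorm (fun x => u t (x + ξ) - u t x) 3 μT) ^ (3:ℝ) := by
          simp only [hPu]
          rw [eLpNorm_eq_lintegral_rpow_enorm_toReal (by norm_num) (by norm_num),
            ← ENNReal.rpow_mul]
          norm_num
          rfl
        rw [heq]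
        calc (eLpNorm (fun x => u t (x + ξ) - u t x) 3 μT) ^ (3:ℝ)
            ≤ (besovNorm s (u t) * ENNReal.ofReal (‖ξ‖ ^ s)) ^ (3:ℝ) :=
              ENNReal.rpow_le_rpow (besov_diff_le (u t) hξ) (by norm_num)
          _ = (besovNorm s (u t)) ^ (3:ℕ) * ENNReal.ofReal (‖ξ‖ ^ s) ^ (3:ℝ) := by
              rw [ENNReal.mul_rpow_of_nonneg _ _ (by norm_num : (0:ℝ) ≤ 3)]
              congr 1
              rw [← ENNReal.rpow_natCast (besovNorm s (u t)) 3]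
              norm_num
      have hPzB : ∀ t : ℝ, Pz t ≤ (besovNorm r (Z t)) ^ (3:ℕ) *
          ENNReal.ofReal (‖ξ‖ ^ r) ^ (3:ℝ) := by
        intro t
        have heq : Pz t = (eLpNorm (fun x => Z t (x + ξ) - Z t x) 3 μT) ^ (3:ℝ) := by
          simp only [hPz]
          rw [eLpNorm_eq_lintegral_rpow_enorm_toReal (by norm_num) (by norm_num),
            ← ENNReal.rpow_mul]
          norm_num
          rfl
        rw [heq]
        calc (eLpNorm (fun x => Z t (x + ξ) - Z t x) 3 μT) ^ (3:ℝ)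
            ≤ (besovNorm r (Z t) * ENNReal.ofReal (‖ξ‖ ^ r)) ^ (3:ℝ) :=
              ENNReal.rpow_le_rpow (besov_diff_le (Z t) hξ) (by norm_num)
          _ = (besovNorm r (Z t)) ^ (3:ℕ) * ENNReal.ofReal (‖ξ‖ ^ r) ^ (3:ℝ) := by
              rw [ENNReal.mul_rpow_of_nonneg _ _ (by norm_num : (0:ℝ) ≤ 3)]
              congr 1
              rw [← ENNReal.rpow_natCast (besovNorm r (Z t)) 3]
              norm_num
      -- integrate the besov bounds in t
      have hPuint : (∫⁻ t in Set.Ioo 0 T, Pu t) ≤ Mu * ENNReal.ofReal (‖ξ‖ ^ s) ^ (3:ℝ) := by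
        calc (∫⁻ t in Set.Ioo 0 T, Pu t)
            ≤ ∫⁻ t in Set.Ioo 0 T, (besovNorm s (u t)) ^ (3:ℕ) *
                ENNReal.ofReal (‖ξ‖ ^ s) ^ (3:ℝ) := lintegral_mono fun t => hPuB t
          _ = Mu * ENNReal.ofReal (‖ξ‖ ^ s) ^ (3:ℝ) :=
              lintegral_mul_const' _ _
                (ENNReal.rpow_ne_top_of_nonneg (by norm_num) ENNReal.ofReal_ne_top)
      have hPzint : (∫⁻ t in Set.Ioo 0 T, Pz t) ≤ Mz * ENNReal.ofReal (‖ξ‖ ^ r) ^ (3:ℝ) := by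
        calc (∫⁻ t in Set.Ioo 0 T, Pz t)
            ≤ ∫⁻ t in Set.Ioo 0 T, (besovNorm r (Z t)) ^ (3:ℕ) *
                ENNReal.ofReal (‖ξ‖ ^ r) ^ (3:ℝ) := lintegral_mono fun t => hPzB t
          _ = Mz * ENNReal.ofReal (‖ξ‖ ^ r) ^ (3:ℝ) :=
              lintegral_mul_const' _ _
                (ENNReal.rpow_ne_top_of_nonneg (by norm_num) ENNReal.ofReal_ne_top)
      -- Hölder in t and collapse
      calc (∫⁻ t in Set.Ioo 0 T, ∫⁻ x, (‖u t (x + ξ) - u t x‖₊ : ℝ≥0∞) *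
            (‖Z t (x + ξ) - Z t x‖₊ : ℝ≥0∞) ^ (2 : ℕ) ∂μT)
          ≤ ∫⁻ t in Set.Ioo 0 T, Pu t ^ ((1:ℝ)/3) * Pz t ^ ((2:ℝ)/3) :=
            lintegral_mono fun t => hΦle t
        _ ≤ (∫⁻ t in Set.Ioo 0 T, Pu t) ^ ((1:ℝ)/3) *
              (∫⁻ t in Set.Ioo 0 T, Pz t) ^ ((2:ℝ)/3) :=
            lint_holder _ _ _ hPumeas hPzmeas
        _ ≤ (Mu * ENNReal.ofReal (‖ξ‖ ^ s) ^ (3:ℝ)) ^ ((1:ℝ)/3) *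
              (Mz * ENNReal.ofReal (‖ξ‖ ^ r) ^ (3:ℝ)) ^ ((2:ℝ)/3) :=
            mul_le_mul' (ENNReal.rpow_le_rpow hPuint (by norm_num))
              (ENNReal.rpow_le_rpow hPzint (by norm_num))
        _ = ENNReal.ofReal (‖ξ‖ ^ (s + 2 * r)) * Q := by
            rw [ENNReal.mul_rpow_of_nonneg _ _ (by norm_num : (0:ℝ) ≤ (1:ℝ)/3),
              ENNReal.mul_rpow_of_nonneg _ _ (by norm_num : (0:ℝ) ≤ (2:ℝ)/3),
              ← ENNReal.rpow_mul, ← ENNReal.rpow_mul]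
            have hc1 : ENNReal.ofReal (‖ξ‖ ^ s) ^ ((3:ℝ) * ((1:ℝ)/3))
                = ENNReal.ofReal (‖ξ‖ ^ s) := by norm_num
            have hc2 : ENNReal.ofReal (‖ξ‖ ^ r) ^ ((3:ℝ) * ((2:ℝ)/3))
                = ENNReal.ofReal (‖ξ‖ ^ r) ^ (2:ℝ) := by norm_num
            rw [hc1, hc2]
            have hcollapse : ENNReal.ofReal (‖ξ‖ ^ s) * ENNReal.ofReal (‖ξ‖ ^ r) ^ (2:ℝ)
                = ENNReal.ofReal (‖ξ‖ ^ (s + 2 * r)) := by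
              rw [ENNReal.ofReal_rpow_of_pos (Real.rpow_pos_of_pos hξpos r),
                ← ENNReal.ofReal_mul (Real.rpow_nonneg (norm_nonneg _) _)]
              congr 1
              rw [← Real.rpow_mul (norm_nonneg _), ← Real.rpow_add hξpos]
              ring_nf
            rw [hQ, ← hcollapse]
            ring
  -- master bound for each ε > 0
  have master : ∀ ε : ℝ, 0 < ε →
      (‖∫ t in Set.Ioo 0 T, ∫ x in torusBox, D2eps χ ε u Z x t * ψ t x‖₊ : ℝ≥0∞) ≤
        ENNReal.ofReal Cψ * (Q * ENNReal.ofReal (ε ^ (s + 2 * r - 1) * K0)) := by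
    intro ε hε
    set Gε : D3 → ℝ := fun ξ =>
      ∑ i, |fderiv ℝ (fun η : D3 => (ε ^ (3 : ℕ))⁻¹ * χ (ε⁻¹ • η)) ξ (Pi.single i 1 : D3)|
      with hGε
    have hGεnn : ∀ ξ, 0 ≤ Gε ξ := fun ξ => Finset.sum_nonneg fun i _ => abs_nonneg _
    have hχεsm : ContDiff ℝ (⊤ : ℕ∞) (fun η : D3 => (ε ^ (3 : ℕ))⁻¹ * χ (ε⁻¹ • η)) :=
      contDiff_const.mul (hχsm.comp (contDiff_id.const_smul ε⁻¹))
    have hGεcont : Continuous Gε := continuous_finset_sum _ fun i _ =>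
      ((hχεsm.continuous_fderiv (by simp)).clm_apply continuous_const).abs
    set Φ : ℝ → D3 → ℝ≥0∞ := fun t ξ => ∫⁻ x, (‖u t (x + ξ) - u t x‖₊ : ℝ≥0∞) *
      (‖Z t (x + ξ) - Z t x‖₊ : ℝ≥0∞) ^ (2 : ℕ) ∂μT with hΦ
    have hΦmeas : Measurable fun q : ℝ × D3 => Φ q.1 q.2 := by
      apply Measurable.lintegral_prod_right'
        (f := fun p : (ℝ × D3) × D3 => (‖u p.1.1 (p.2 + p.1.2) - u p.1.1 p.2‖₊ : ℝ≥0∞) *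
          (‖Z p.1.1 (p.2 + p.1.2) - Z p.1.1 p.2‖₊ : ℝ≥0∞) ^ (2 : ℕ))
      have m1 : Measurable fun p : (ℝ × D3) × D3 => (p.1.1, p.2 + p.1.2) :=
        (measurable_fst.fst).prodMk (measurable_snd.add measurable_fst.snd)
      have m2 : Measurable fun p : (ℝ × D3) × D3 => (p.1.1, p.2) :=
        (measurable_fst.fst).prodMk measurable_snd
      exact (((humeas.comp m1).sub (humeas.comp m2)).enorm).mul
        ((((hZmeas.comp m1).sub (hZmeas.comp m2)).enorm).pow_const _)
    have hmeasξ : Measurable fun ξ : D3 => ENNReal.ofReal (Gε ξ * ‖ξ‖ ^ (s + 2 * r)) :=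
      ((hGεcont.mul (continuous_norm.rpow_const fun _ => Or.inr hapos.le)).measurable).ennreal_ofReal
    have step1 : (‖∫ t in Set.Ioo 0 T, ∫ x in torusBox, D2eps χ ε u Z x t * ψ t x‖₊ : ℝ≥0∞)
        ≤ ∫⁻ t in Set.Ioo 0 T, (∫⁻ ξ, ENNReal.ofReal (Gε ξ) * Φ t ξ) * ENNReal.ofReal Cψ := by
      refine le_trans (enorm_integral_le_lintegral_enorm _) ?_
      refine lintegral_mono_ae ?_
      rw [ae_restrict_iff' measurableSet_Ioo]
      refine Filter.Eventually.of_forall fun t ht => ?_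
      have hx1 : (‖∫ x in torusBox, D2eps χ ε u Z x t * ψ t x‖₊ : ℝ≥0∞)
          ≤ ∫⁻ x, (‖D2eps χ ε u Z x t * ψ t x‖₊ : ℝ≥0∞) ∂μT :=
        enorm_integral_le_lintegral_enorm _
      have hx2 : (∫⁻ x, (‖D2eps χ ε u Z x t * ψ t x‖₊ : ℝ≥0∞) ∂μT)
          ≤ ∫⁻ x, (‖D2eps χ ε u Z x t‖₊ : ℝ≥0∞) * ENNReal.ofReal Cψ ∂μT := by
        refine lintegral_mono_ae ?_
        have hres : μT = volume.restrict torusBox := rfl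
        rw [hres, ae_restrict_iff' hboxmeas]
        refine Filter.Eventually.of_forall fun x hx => ?_
        rw [nnnorm_mul, ENNReal.coe_mul]
        refine mul_le_mul_right ?_ _
        rw [← enorm_eq_nnnorm, Real.enorm_eq_ofReal_abs]
        exact ENNReal.ofReal_le_ofReal (hψbd t ht x hx)
      have hx3 : (∫⁻ x, (‖D2eps χ ε u Z x t‖₊ : ℝ≥0∞) * ENNReal.ofReal Cψ ∂μT)
          = (∫⁻ x, (‖D2eps χ ε u Z x t‖₊ : ℝ≥0∞) ∂μT) * ENNReal.ofReal Cψ :=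
        lintegral_mul_const' _ _ ENNReal.ofReal_ne_top
      have hx4 : (∫⁻ x, (‖D2eps χ ε u Z x t‖₊ : ℝ≥0∞) ∂μT) * ENNReal.ofReal Cψ
          ≤ (∫⁻ ξ, ENNReal.ofReal (Gε ξ) * Φ t ξ) * ENNReal.ofReal Cψ :=
        mul_le_mul_left (D2_xbound χ hχsm hε u Z t (hut t) (hZt t)) _
      exact hx1.trans (hx2.trans (hx3.le.trans hx4))
    refine step1.trans ?_
    rw [lintegral_mul_const' _ _ ENNReal.ofReal_ne_top]
    have hswap : (∫⁻ t in Set.Ioo 0 T, ∫⁻ ξ, ENNReal.ofReal (Gε ξ) * Φ t ξ)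
        = ∫⁻ ξ, ∫⁻ t in Set.Ioo 0 T, ENNReal.ofReal (Gε ξ) * Φ t ξ := by
      apply lintegral_lintegral_swap
      exact ((hGεcont.measurable.comp measurable_snd).ennreal_ofReal.mul hΦmeas).aemeasurable
    rw [hswap]
    have hξle : ∀ ξ : D3, (∫⁻ t in Set.Ioo 0 T, ENNReal.ofReal (Gε ξ) * Φ t ξ)
        ≤ Q * ENNReal.ofReal (Gε ξ * ‖ξ‖ ^ (s + 2 * r)) := by
      intro ξ
      rw [lintegral_const_mul' _ _ ENNReal.ofReal_ne_top]
      refine le_trans (mul_le_mul_right (stepC ξ) _) (le_of_eq ?_)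
      rw [ENNReal.ofReal_mul (hGεnn ξ)]
      ring
    refine le_trans (mul_le_mul_left (lintegral_mono hξle) _) (le_of_eq ?_)
    rw [lintegral_const_mul _ hmeasξ]
    rw [moll_scale χ hχsm hχc (s + 2 * r) hapos hε]
    rw [← hK0]
    ring
  -- conclusion by squeezing
  apply squeeze_zero_norm' (a := fun ε : ℝ => ε ^ (s + 2 * r - 1) * (Cψ * Q.toReal * K0))
  · filter_upwards [self_mem_nhdsWithin] with ε hε
    replace hε : 0 < ε := hε
    have h1 := master ε hε
    have hne : ENNReal.ofReal Cψ * (Q * ENNReal.ofReal (ε ^ (s + 2 * r - 1) * K0)) ≠ ⊤ :=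
      ENNReal.mul_ne_top ENNReal.ofReal_ne_top
        (ENNReal.mul_ne_top hQtop ENNReal.ofReal_ne_top)
    calc ‖∫ t in Set.Ioo 0 T, ∫ x in torusBox, D2eps χ ε u Z x t * ψ t x‖
        = ((‖∫ t in Set.Ioo 0 T, ∫ x in torusBox, D2eps χ ε u Z x t * ψ t x‖₊ : ℝ≥0∞)).toReal
          := by simp
      _ ≤ (ENNReal.ofReal Cψ * (Q * ENNReal.ofReal (ε ^ (s + 2 * r - 1) * K0))).toReal :=
          ENNReal.toReal_mono hne h1
      _ = Cψ * (Q.toReal * (ε ^ (s + 2 * r - 1) * K0)) := by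
          rw [ENNReal.toReal_mul, ENNReal.toReal_mul, ENNReal.toReal_ofReal hCψnn,
            ENNReal.toReal_ofReal (mul_nonneg (Real.rpow_nonneg hε.le _) hK0nn)]
      _ = ε ^ (s + 2 * r - 1) * (Cψ * Q.toReal * K0) := by ring
  · have := part1.mul_const (Cψ * Q.toReal * K0)
    simpa using this
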